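/- Let T be a strongly Cesàro bounded operator on a Banach space X, let q and q* be the cotypes of X and X* respectively, and set s = min(q, q*). If s < ∞, then ‖T^n‖ = O(n/(log n)^{1/s}); in particular ‖T^n‖ = o(n). -/

import Mathlib

/-!
Fix `n`, `R` with `2 ^ R ≤ n`, and `‖x‖ ≤ 1`, `‖φ‖ ≤ 1` with `Re φ (T^n x)` close to `‖T^n‖`.
Split `[1, 2^R)` into the dyadic blocks `[2^i, 2^(i+1))`. Since `φ (T^j (T^(n-j) x)) = φ (T^n x)`,
after randomising with independent signs the pairing of `2^(-i) ∑_{block i} ±φ ∘ T^j` with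
`∑_{block i} ±T^(n-j) x` averages to about `‖T^n‖` for each block, `R ‖T^n‖` in total.
Strong Cesàro boundedness bounds every signed sum: `‖∑_{block i} ±φ ∘ T^j‖ ≤ 2C 2^i` and
`‖∑_j ±T^(n-j) x‖ ≤ C n`. Cotype `q` of `X`, applied to the block vectors, and Hölder over the
`R` blocks bound the total by `2 C² K^(1/q) n R^(1-1/q)`, so `‖T^n‖ R^(1/q) ≲ n`; then take
`R = log₂ n`. Exchanging the roles of `X` and `X*` gives the same bound with the cotype of `X*`.
-/

open MeasureTheory Filter Asymptotics Finset

/-- The sign `±1` attached to a Boolean. -/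
def rsign (b : Bool) : ℝ := if b then 1 else -1

/-- `X` has (Rademacher) cotype `q`: `∑ ‖xᵢ‖^q` is at most `K` times the expectation over
all sign patterns of `‖∑ εᵢ xᵢ‖^q`. -/
def HasCotypeQ (X : Type) [NormedAddCommGroup X] [NormedSpace ℝ X] (q : ℝ) : Prop :=
  ∃ K : ℝ, 0 < K ∧ ∀ n : ℕ, ∀ x : Fin n → X,
    2 ^ n * ∑ i, ‖x i‖ ^ q ≤
      K * ∑ ε : Fin n → Bool, ‖∑ i, rsign (ε i) • x i‖ ^ q

/-- `T` is strongly Cesàro bounded with constant `C`. -/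
def StrongCesaroBounded {X : Type} [NormedAddCommGroup X] [NormedSpace ℂ X]
    (T : X →L[ℂ] X) (C : ℝ) : Prop :=
  0 < C ∧ ∀ n : ℕ, 1 ≤ n → ∀ x : X, ∀ φ : StrongDual ℂ X,
    ∑ k ∈ Finset.range n, ‖φ ((T ^ k) x)‖ ≤ C * n * ‖φ‖ * ‖x‖


lemma rsign_mul_self (b : Bool) : rsign b * rsign b = 1 := by
  cases b <;> norm_num [rsign]

lemma abs_rsign (b : Bool) : |rsign b| = 1 := by
  cases b <;> norm_num [rsign]

lemma rsign_not (b : Bool) : rsign (!b) = -rsign b := by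
  cases b <;> simp [rsign]

lemma sum_rsign_mul_rsign_of_ne {ι : Type*} [Fintype ι] [DecidableEq ι] {a b : ι} (hab : a ≠ b) :
    ∑ ε : ι → Bool, rsign (ε a) * rsign (ε b) = 0 := by
  set flip : (ι → Bool) → (ι → Bool) := fun ε => Function.update ε a (!ε a)
  have hflip : Function.Involutive flip := fun ε => by
    ext i
    rcases eq_or_ne i a with rfl | hi <;> simp [flip, Function.update_of_ne, *]
  have hneg : ∀ ε, rsign (flip ε a) * rsign (flip ε b) = -(rsign (ε a) * rsign (ε b)) := by
    intro ε
    simp [flip, Function.update_of_ne hab.symm, rsign_not]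
  have := Equiv.sum_comp hflip.toPerm fun ε => rsign (ε a) * rsign (ε b)
  simp only [Function.Involutive.coe_toPerm, hneg, Finset.sum_neg_distrib] at this
  linarith

lemma sum_rsign_mul_rsign {ι : Type*} [Fintype ι] [DecidableEq ι] (a b : ι) :
    ∑ ε : ι → Bool, rsign (ε a) * rsign (ε b) = if a = b then 2 ^ Fintype.card ι else 0 := by
  split_ifs with hab
  · simp [hab, rsign_mul_self]
  · exact sum_rsign_mul_rsign_of_ne hab

lemma sum_bilin_sum_rsign_smul {E F κ ι : Type*} [AddCommGroup E] [Module ℝ E]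
    [AddCommGroup F] [Module ℝ F] [Fintype κ] [Fintype ι] [DecidableEq ι] {e : κ → ι}
    (he : Function.Injective e) (P : F →ₗ[ℝ] E →ₗ[ℝ] ℝ) (b : κ → F) (a : κ → E) :
    ∑ ε : ι → Bool, P (∑ k, rsign (ε (e k)) • b k) (∑ k, rsign (ε (e k)) • a k)
      = 2 ^ Fintype.card ι * ∑ k, P (b k) (a k) := by
  classical
  simp only [map_sum, map_smul, LinearMap.sum_apply, LinearMap.smul_apply,
    smul_eq_mul, Finset.mul_sum]
  rw [Finset.sum_comm]
  refine Finset.sum_congr rfl fun k _ => ?_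
  rw [Finset.sum_comm]
  simp_rw [← mul_assoc, ← Finset.sum_mul, sum_rsign_mul_rsign]
  simp [he.eq_iff]

def IsCotypeConstant (E : Type*) [NormedAddCommGroup E] [NormedSpace ℝ E] (q K : ℝ) : Prop :=
  ∀ n : ℕ, ∀ x : Fin n → E,
    2 ^ n * ∑ i, ‖x i‖ ^ q ≤ K * ∑ ε : Fin n → Bool, ‖∑ i, rsign (ε i) • x i‖ ^ q

namespace IsCotypeConstant

variable {E : Type*} [NormedAddCommGroup E] [NormedSpace ℝ E] {q K D : ℝ}

lemma sum_norm_rpow_le (hE : IsCotypeConstant E q K) (hq : 0 ≤ q) (hK : 0 ≤ K) {R : ℕ}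
    (W : Fin R → E) (hW : ∀ δ : Fin R → Bool, ‖∑ i, rsign (δ i) • W i‖ ≤ D) :
    ∑ i, ‖W i‖ ^ q ≤ K * D ^ q := by
  have hsigns : ∑ δ : Fin R → Bool, ‖∑ i, rsign (δ i) • W i‖ ^ q ≤ 2 ^ R * D ^ q := by
    calc ∑ δ : Fin R → Bool, ‖∑ i, rsign (δ i) • W i‖ ^ q
        ≤ ∑ _δ : Fin R → Bool, D ^ q :=
          Finset.sum_le_sum fun δ _ => Real.rpow_le_rpow (norm_nonneg _) (hW δ) hq
      _ = 2 ^ R * D ^ q := by simp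
  refine le_of_mul_le_mul_left ?_ (by positivity : (0 : ℝ) < 2 ^ R)
  calc 2 ^ R * ∑ i, ‖W i‖ ^ q
      ≤ K * ∑ δ : Fin R → Bool, ‖∑ i, rsign (δ i) • W i‖ ^ q := hE R W
    _ ≤ K * (2 ^ R * D ^ q) := by gcongr
    _ = 2 ^ R * (K * D ^ q) := by ring

lemma sum_norm_le (hE : IsCotypeConstant E q K) (hq : 1 ≤ q) (hK : 0 ≤ K) {R : ℕ}
    (W : Fin R → E) (hW : ∀ δ : Fin R → Bool, ‖∑ i, rsign (δ i) • W i‖ ≤ D) :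
    ∑ i, ‖W i‖ ≤ K ^ q⁻¹ * D * R ^ (1 - q⁻¹) := by
  have hD : 0 ≤ D := (norm_nonneg _).trans (hW fun _ => true)
  have hpow := hE.sum_norm_rpow_le (by linarith) hK W hW
  have hHolder := Real.inner_le_weight_mul_Lp_of_nonneg Finset.univ hq (fun _ => 1)
    (fun i => ‖W i‖) (fun _ => zero_le_one) (fun i => norm_nonneg (W i))
  simp only [one_mul, Finset.sum_const, Finset.card_univ, Fintype.card_fin, nsmul_eq_mul,
    mul_one] at hHolder
  calc ∑ i, ‖W i‖ ≤ R ^ (1 - q⁻¹) * (∑ i, ‖W i‖ ^ q) ^ q⁻¹ := hHolder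
    _ ≤ R ^ (1 - q⁻¹) * (K * D ^ q) ^ q⁻¹ := by gcongr
    _ = K ^ q⁻¹ * D * R ^ (1 - q⁻¹) := by
      rw [Real.mul_rpow hK (by positivity), Real.rpow_rpow_inv hD (by linarith)]
      ring

end IsCotypeConstant

theorem IsCotypeConstant.diag_mul_rpow_le {E F : Type*} [NormedAddCommGroup E]
    [NormedSpace ℝ E] [NormedAddCommGroup F] [NormedSpace ℝ F] {p K B D c : ℝ}
    (hE : IsCotypeConstant E p K) (hp : 1 ≤ p) (hK : 0 ≤ K)
    (P : F →ₗ[ℝ] E →ₗ[ℝ] ℝ) (hP : ∀ f e, P f e ≤ ‖f‖ * ‖e‖)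
    {R : ℕ} (hR : 0 < R) {κ : Fin R → Type*} [∀ i, Fintype (κ i)] [∀ i, Nonempty (κ i)]
    (a : (Σ i, κ i) → E) (b : (Σ i, κ i) → F) (hdiag : ∀ σ, c ≤ P (b σ) (a σ))
    (hb : ∀ i (β : κ i → ℝ), (∀ k, |β k| ≤ 1) →
      ‖∑ k, β k • b ⟨i, k⟩‖ ≤ B * Fintype.card (κ i))
    (ha : ∀ β : (Σ i, κ i) → ℝ, (∀ σ, |β σ| ≤ 1) → ‖∑ σ, β σ • a σ‖ ≤ D) :
    c * R ^ p⁻¹ ≤ K ^ p⁻¹ * B * D := by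
  classical
  -- Averaging over the signs `ε` kills the off-diagonal terms of each block pairing (`lower`);
  -- for fixed `ε`, cotype and Hölder bound the sum over the blocks (`upper`).
  set W : ((Σ i, κ i) → Bool) → Fin R → E := fun ε i => ∑ k, rsign (ε ⟨i, k⟩) • a ⟨i, k⟩
  set Θ : ((Σ i, κ i) → Bool) → Fin R → F :=
    fun ε i => (Fintype.card (κ i) : ℝ)⁻¹ • ∑ k, rsign (ε ⟨i, k⟩) • b ⟨i, k⟩
  set N := Fintype.card (Σ i, κ i)
  have hcard : ∀ i, (0 : ℝ) < Fintype.card (κ i) := fun i => by exact_mod_cast Fintype.card_pos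
  have hB : 0 ≤ B :=
    (mul_nonneg_iff_of_pos_right (hcard ⟨0, hR⟩)).mp
      ((norm_nonneg _).trans (hb ⟨0, hR⟩ 0 (by simp)))
  have lower : ∀ i, 2 ^ N * c ≤ ∑ ε, P (Θ ε i) (W ε i) := by
    intro i
    simp only [Θ, W, map_smul, LinearMap.smul_apply, smul_eq_mul, ← Finset.mul_sum,
      sum_bilin_sum_rsign_smul sigma_mk_injective]
    rw [le_inv_mul_iff₀ (hcard i), mul_left_comm]
    gcongr
    have := Finset.card_nsmul_le_sum Finset.univ _ c fun k _ => hdiag ⟨i, k⟩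
    rwa [Finset.card_univ, nsmul_eq_mul] at this
  have upper : ∀ ε, ∑ i, P (Θ ε i) (W ε i) ≤ K ^ p⁻¹ * B * D * R ^ (1 - p⁻¹) := by
    intro ε
    have hΘ : ∀ i, ‖Θ ε i‖ ≤ B := fun i => by
      rw [norm_smul, norm_inv, Real.norm_natCast, inv_mul_le_iff₀ (hcard i), mul_comm]
      exact hb i _ fun k => (abs_rsign _).le
    have hW : ∀ δ : Fin R → Bool, ‖∑ i, rsign (δ i) • W ε i‖ ≤ D := fun δ => by
      have : ∑ i, rsign (δ i) • W ε i = ∑ σ, (rsign (δ σ.1) * rsign (ε σ)) • a σ := by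
        simp only [W, Finset.smul_sum, smul_smul, Fintype.sum_sigma]
      rw [this]
      exact ha _ fun σ => by rw [abs_mul, abs_rsign, abs_rsign, one_mul]
    calc ∑ i, P (Θ ε i) (W ε i) ≤ ∑ i, B * ‖W ε i‖ :=
          Finset.sum_le_sum fun i _ => (hP _ _).trans (by gcongr; exact hΘ i)
      _ = B * ∑ i, ‖W ε i‖ := (Finset.mul_sum _ _ _).symm
      _ ≤ B * (K ^ p⁻¹ * D * R ^ (1 - p⁻¹)) := by gcongr; exact hE.sum_norm_le hp hK _ hW
      _ = K ^ p⁻¹ * B * D * R ^ (1 - p⁻¹) := by ring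
  have hsum : 2 ^ N * (c * R) ≤ 2 ^ N * (K ^ p⁻¹ * B * D * R ^ (1 - p⁻¹)) := by
    calc 2 ^ N * (c * R) = ∑ _i : Fin R, 2 ^ N * c := by simp; ring
      _ ≤ ∑ i, ∑ ε, P (Θ ε i) (W ε i) := Finset.sum_le_sum fun i _ => lower i
      _ = ∑ ε, ∑ i, P (Θ ε i) (W ε i) := Finset.sum_comm
      _ ≤ ∑ _ε : (Σ i, κ i) → Bool, K ^ p⁻¹ * B * D * R ^ (1 - p⁻¹) :=
          Finset.sum_le_sum fun ε _ => upper ε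
      _ = 2 ^ N * (K ^ p⁻¹ * B * D * R ^ (1 - p⁻¹)) := by simp [N]
  have hRpos : (0 : ℝ) < R := by exact_mod_cast hR
  have h : c * R ^ p⁻¹ * R ^ (1 - p⁻¹) ≤ K ^ p⁻¹ * B * D * R ^ (1 - p⁻¹) := by
    rw [mul_assoc, ← Real.rpow_add hRpos, add_sub_cancel, Real.rpow_one]
    exact le_of_mul_le_mul_left hsum (by positivity)
  exact le_of_mul_le_mul_right h (by positivity)

lemma ContinuousLinearMap.exists_re_dual_apply_gt {𝕜 E F : Type*} [RCLike 𝕜]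
    [NormedAddCommGroup E] [NormedSpace 𝕜 E] [NormedAddCommGroup F] [NormedSpace 𝕜 F]
    (S : E →L[𝕜] F) {r : ℝ} (hr : r < ‖S‖) :
    ∃ x : E, ∃ φ : StrongDual 𝕜 F, ‖x‖ ≤ 1 ∧ ‖φ‖ ≤ 1 ∧ r < RCLike.re (φ (S x)) := by
  obtain ⟨x, hx, hSx⟩ := S.exists_lt_apply_of_lt_opNorm hr
  obtain ⟨φ, hφ, hφSx⟩ := exists_dual_vector'' 𝕜 (S x)
  exact ⟨x, φ, hx.le, hφ, by rwa [hφSx, RCLike.ofReal_re]⟩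

section ReDualPairing

variable (X : Type*) [NormedAddCommGroup X] [NormedSpace ℂ X]

noncomputable def reDualPairing : StrongDual ℂ X →ₗ[ℝ] X →ₗ[ℝ] ℝ :=
  ((topDualPairing ℂ X).restrictScalars₁₂ ℝ ℝ).compr₂ Complex.reLm

variable {X}

@[simp]
lemma reDualPairing_apply (φ : StrongDual ℂ X) (x : X) : reDualPairing X φ x = (φ x).re :=
  rfl

lemma reDualPairing_le (φ : StrongDual ℂ X) (x : X) : reDualPairing X φ x ≤ ‖φ‖ * ‖x‖ :=
  (Complex.re_le_norm _).trans (φ.le_opNorm x)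

end ReDualPairing

def dyadicIndex {R : ℕ} (σ : Σ i : Fin R, Fin (2 ^ (i : ℕ))) : ℕ := 2 ^ (σ.1 : ℕ) + σ.2

section DyadicIndex

variable {R : ℕ}

lemma dyadicIndex_mk_lt (i : Fin R) (k : Fin (2 ^ (i : ℕ))) :
    dyadicIndex ⟨i, k⟩ < 2 ^ ((i : ℕ) + 1) := by
  have := k.isLt
  simp only [dyadicIndex, pow_succ]
  omega

lemma dyadicIndex_mk_injective (i : Fin R) :
    Function.Injective fun k : Fin (2 ^ (i : ℕ)) => dyadicIndex ⟨i, k⟩ :=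
  fun _ _ h => Fin.ext (Nat.add_left_cancel h)

lemma dyadicIndex_injective : Function.Injective (dyadicIndex (R := R)) := by
  rintro ⟨i, k⟩ ⟨i', k'⟩ h
  have hlog : ∀ σ : Σ i : Fin R, Fin (2 ^ (i : ℕ)), Nat.log 2 (dyadicIndex σ) = σ.1 :=
    fun σ => Nat.log_eq_of_pow_le_of_lt_pow (Nat.le_add_right _ _) (dyadicIndex_mk_lt σ.1 σ.2)
  obtain rfl : i = i' := Fin.ext (by simpa only [hlog] using congrArg (Nat.log 2) h)
  rw [dyadicIndex_mk_injective i h]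

lemma one_le_dyadicIndex (σ : Σ i : Fin R, Fin (2 ^ (i : ℕ))) : 1 ≤ dyadicIndex σ :=
  Nat.one_le_two_pow.trans (Nat.le_add_right _ _)

lemma dyadicIndex_lt (σ : Σ i : Fin R, Fin (2 ^ (i : ℕ))) : dyadicIndex σ < 2 ^ R :=
  (dyadicIndex_mk_lt σ.1 σ.2).trans_le (Nat.pow_le_pow_right two_pos σ.1.isLt)

lemma sub_dyadicIndex_injective {n : ℕ} (hRn : 2 ^ R ≤ n) :
    Function.Injective fun σ : Σ i : Fin R, Fin (2 ^ (i : ℕ)) => n - dyadicIndex σ := by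
  intro σ τ h
  have := dyadicIndex_lt σ
  have := dyadicIndex_lt τ
  exact dyadicIndex_injective (by simp only at h; omega)

lemma sub_dyadicIndex_lt {n : ℕ} (hRn : 2 ^ R ≤ n) (σ : Σ i : Fin R, Fin (2 ^ (i : ℕ))) :
    n - dyadicIndex σ < n := by
  have := one_le_dyadicIndex σ
  have := dyadicIndex_lt σ
  omega

end DyadicIndex

namespace StrongCesaroBounded

variable {X : Type} [NormedAddCommGroup X] [NormedSpace ℂ X] {T : X →L[ℂ] X} {C : ℝ}
  {ι : Type*} [Fintype ι] {e : ι → ℕ} {N : ℕ}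

lemma sum_norm_apply_pow_le (hT : StrongCesaroBounded T C) (he : Function.Injective e)
    (heN : ∀ j, e j < N) (φ : StrongDual ℂ X) (x : X) :
    ∑ j, ‖φ ((T ^ e j) x)‖ ≤ C * N * ‖φ‖ * ‖x‖ := by
  classical
  rcases Nat.eq_zero_or_pos N with rfl | hN
  · have : IsEmpty ι := ⟨fun j => Nat.not_lt_zero _ (heN j)⟩
    simp
  calc ∑ j, ‖φ ((T ^ e j) x)‖ = ∑ k ∈ Finset.univ.image e, ‖φ ((T ^ k) x)‖ :=
        (Finset.sum_image (f := fun k => ‖φ ((T ^ k) x)‖) fun _ _ _ _ h => he h).symm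
    _ ≤ ∑ k ∈ Finset.range N, ‖φ ((T ^ k) x)‖ :=
        Finset.sum_le_sum_of_subset_of_nonneg (by simpa [Finset.subset_iff] using heN)
          fun _ _ _ => norm_nonneg _
    _ ≤ C * N * ‖φ‖ * ‖x‖ := hT.2 N hN x φ

lemma norm_sum_smul_apply_pow_le (hT : StrongCesaroBounded T C) (he : Function.Injective e)
    (heN : ∀ j, e j < N) (β : ι → ℝ) (hβ : ∀ j, |β j| ≤ 1) (φ : StrongDual ℂ X) (x : X) :
    ‖∑ j, β j • φ ((T ^ e j) x)‖ ≤ C * N * ‖φ‖ * ‖x‖ :=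
  calc ‖∑ j, β j • φ ((T ^ e j) x)‖ ≤ ∑ j, ‖β j • φ ((T ^ e j) x)‖ := norm_sum_le _ _
    _ ≤ ∑ j, ‖φ ((T ^ e j) x)‖ := Finset.sum_le_sum fun j _ => by
        rw [norm_smul, Real.norm_eq_abs]
        exact mul_le_of_le_one_left (norm_nonneg _) (hβ j)
    _ ≤ C * N * ‖φ‖ * ‖x‖ := hT.sum_norm_apply_pow_le he heN φ x

lemma norm_sum_smul_pow_apply_le (hT : StrongCesaroBounded T C) (he : Function.Injective e)
    (heN : ∀ j, e j < N) (β : ι → ℝ) (hβ : ∀ j, |β j| ≤ 1) (x : X) :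
    ‖∑ j, β j • (T ^ e j) x‖ ≤ C * N * ‖x‖ :=
  NormedSpace.norm_le_dual_bound ℂ _ (by have := hT.1; positivity) fun φ => by
    simpa only [map_sum, ContinuousLinearMap.map_smul_of_tower, mul_right_comm _ ‖φ‖]
      using hT.norm_sum_smul_apply_pow_le he heN β hβ φ x

lemma norm_sum_smul_comp_pow_le (hT : StrongCesaroBounded T C) (he : Function.Injective e)
    (heN : ∀ j, e j < N) (β : ι → ℝ) (hβ : ∀ j, |β j| ≤ 1) (φ : StrongDual ℂ X) :
    ‖∑ j, β j • φ.comp (T ^ e j)‖ ≤ C * N * ‖φ‖ :=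
  ContinuousLinearMap.opNorm_le_bound _ (by have := hT.1; positivity) fun x => by
    simpa only [_root_.sum_apply, smul_apply,
      ContinuousLinearMap.comp_apply] using hT.norm_sum_smul_apply_pow_le he heN β hβ φ x

theorem norm_pow_mul_rpow_le_of_isCotypeConstant (hT : StrongCesaroBounded T C) {q K : ℝ}
    (hX : IsCotypeConstant X q K) (hq : 1 ≤ q) (hK : 0 ≤ K) {n R : ℕ} (hR : 0 < R)
    (hRn : 2 ^ R ≤ n) :
    ‖T ^ n‖ * R ^ q⁻¹ ≤ 2 * C ^ 2 * K ^ q⁻¹ * n := by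
  have hRq : (0 : ℝ) < R ^ q⁻¹ := by positivity
  rw [← le_div_iff₀ hRq]
  refine le_of_forall_lt_imp_le_of_dense fun r hr => ?_
  obtain ⟨x, φ, hx, hφ, hr⟩ := (T ^ n).exists_re_dual_apply_gt hr
  have hC := hT.1.le
  rw [le_div_iff₀ hRq]
  refine (hX.diag_mul_rpow_le hq hK (reDualPairing X) reDualPairing_le hR
    (fun σ => (T ^ (n - dyadicIndex σ)) x) (fun σ => φ.comp (T ^ dyadicIndex σ))
    (B := 2 * C) (D := C * n) (fun σ => ?_) (fun i β hβ => ?_) (fun β hβ => ?_)).trans_eq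
    (by ring)
  · rw [reDualPairing_apply, φ.comp_apply, ← mul_apply_eq_comp,
      pow_mul_pow_sub T ((dyadicIndex_lt σ).le.trans hRn)]
    exact hr.le
  · calc ‖∑ k, β k • φ.comp (T ^ dyadicIndex ⟨i, k⟩)‖
          ≤ C * ((2 ^ ((i : ℕ) + 1) : ℕ) : ℝ) * ‖φ‖ :=
          hT.norm_sum_smul_comp_pow_le (dyadicIndex_mk_injective i) (dyadicIndex_mk_lt i) β hβ φ
      _ ≤ C * ((2 ^ ((i : ℕ) + 1) : ℕ) : ℝ) * 1 := by gcongr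
      _ = 2 * C * Fintype.card (Fin (2 ^ (i : ℕ))) := by
          rw [Fintype.card_fin]; push_cast; ring
  · calc ‖∑ σ, β σ • (T ^ (n - dyadicIndex σ)) x‖ ≤ C * n * ‖x‖ :=
          hT.norm_sum_smul_pow_apply_le (sub_dyadicIndex_injective hRn) (sub_dyadicIndex_lt hRn) β
            hβ x
      _ ≤ C * n := mul_le_of_le_one_right (by positivity) hx

theorem norm_pow_mul_rpow_le_of_isCotypeConstant_dual (hT : StrongCesaroBounded T C) {q K : ℝ}
    (hX : IsCotypeConstant (StrongDual ℂ X) q K) (hq : 1 ≤ q) (hK : 0 ≤ K) {n R : ℕ} (hR : 0 < R)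
    (hRn : 2 ^ R ≤ n) :
    ‖T ^ n‖ * R ^ q⁻¹ ≤ 2 * C ^ 2 * K ^ q⁻¹ * n := by
  have hRq : (0 : ℝ) < R ^ q⁻¹ := by positivity
  rw [← le_div_iff₀ hRq]
  refine le_of_forall_lt_imp_le_of_dense fun r hr => ?_
  obtain ⟨x, φ, hx, hφ, hr⟩ := (T ^ n).exists_re_dual_apply_gt hr
  have hC := hT.1.le
  rw [le_div_iff₀ hRq]
  refine (hX.diag_mul_rpow_le hq hK (reDualPairing X).flip
    (fun y ψ => (reDualPairing_le ψ y).trans_eq (mul_comm _ _)) hR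
    (fun σ => φ.comp (T ^ (n - dyadicIndex σ))) (fun σ => (T ^ dyadicIndex σ) x)
    (B := 2 * C) (D := C * n) (fun σ => ?_) (fun i β hβ => ?_) (fun β hβ => ?_)).trans_eq
    (by ring)
  · rw [LinearMap.flip_apply, reDualPairing_apply, φ.comp_apply, ← mul_apply_eq_comp,
      pow_sub_mul_pow T ((dyadicIndex_lt σ).le.trans hRn)]
    exact hr.le
  · calc ‖∑ k, β k • (T ^ dyadicIndex ⟨i, k⟩) x‖
          ≤ C * ((2 ^ ((i : ℕ) + 1) : ℕ) : ℝ) * ‖x‖ :=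
          hT.norm_sum_smul_pow_apply_le (dyadicIndex_mk_injective i) (dyadicIndex_mk_lt i) β hβ x
      _ ≤ C * ((2 ^ ((i : ℕ) + 1) : ℕ) : ℝ) * 1 := by gcongr
      _ = 2 * C * Fintype.card (Fin (2 ^ (i : ℕ))) := by
          rw [Fintype.card_fin]; push_cast; ring
  · calc ‖∑ σ, β σ • φ.comp (T ^ (n - dyadicIndex σ))‖ ≤ C * n * ‖φ‖ :=
          hT.norm_sum_smul_comp_pow_le (sub_dyadicIndex_injective hRn) (sub_dyadicIndex_lt hRn) β
            hβ φ
      _ ≤ C * n := mul_le_of_le_one_right (by positivity) hφ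

end StrongCesaroBounded

lemma Real.log_natCast_le_two_mul_natLog {n : ℕ} (hn : 2 ≤ n) :
    Real.log n ≤ 2 * Nat.log 2 n := by
  have hlt : (n : ℝ) < 2 ^ (Nat.log 2 n + 1) := by
    exact_mod_cast Nat.lt_pow_succ_log_self one_lt_two n
  have hlog2 : Real.log 2 < 1 := Real.log_two_lt_d9.trans (by norm_num)
  have hL : (1 : ℝ) ≤ Nat.log 2 n := by exact_mod_cast Nat.log_pos one_lt_two hn
  calc Real.log n ≤ Real.log (2 ^ (Nat.log 2 n + 1)) :=
        Real.log_le_log (by positivity) hlt.le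
    _ = (Nat.log 2 n + 1) * Real.log 2 := by rw [Real.log_pow]; push_cast; ring
    _ ≤ 2 * Nat.log 2 n := by nlinarith [Real.log_pos one_lt_two]

lemma isBigO_div_log_rpow_of_mul_rpow_le {E : Type*} [SeminormedAddCommGroup E] {u : ℕ → E}
    {α A : ℝ} (hα : 0 ≤ α) (h : ∀ n R : ℕ, 0 < R → 2 ^ R ≤ n → ‖u n‖ * R ^ α ≤ A * n) :
    u =O[atTop] fun n : ℕ => (n : ℝ) / Real.log n ^ α := by
  refine isBigO_iff.2 ⟨2 ^ α * A, ?_⟩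
  filter_upwards [eventually_ge_atTop 2] with n hn
  set L := Nat.log 2 n
  have hlog : 0 < Real.log n := Real.log_pos (by exact_mod_cast hn)
  have hlogα : 0 < Real.log n ^ α := Real.rpow_pos_of_pos hlog α
  have hlogL : Real.log n ^ α ≤ 2 ^ α * L ^ α := by
    rw [← Real.mul_rpow zero_le_two (Nat.cast_nonneg _)]
    exact Real.rpow_le_rpow hlog.le (Real.log_natCast_le_two_mul_natLog hn) hα
  have huL := h n L (Nat.log_pos one_lt_two hn) (Nat.pow_log_le_self 2 (by omega))
  rw [Real.norm_of_nonneg (div_nonneg n.cast_nonneg hlogα.le), mul_div_assoc',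
    le_div_iff₀ hlogα]
  calc ‖u n‖ * Real.log n ^ α ≤ ‖u n‖ * (2 ^ α * L ^ α) := by gcongr
    _ = 2 ^ α * (‖u n‖ * L ^ α) := by ring
    _ ≤ 2 ^ α * (A * n) := by gcongr
    _ = 2 ^ α * A * n := by ring

lemma isLittleO_div_log_rpow {α : ℝ} (hα : 0 < α) :
    (fun n : ℕ => (n : ℝ) / Real.log n ^ α) =o[atTop] fun n : ℕ => (n : ℝ) := by
  have hlim : Tendsto (fun n : ℕ => (Real.log n ^ α)⁻¹) atTop (nhds 0) :=
    tendsto_inv_atTop_zero.comp <| (tendsto_rpow_atTop hα).comp <|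
      Real.tendsto_log_atTop.comp tendsto_natCast_atTop_atTop
  simpa [div_eq_mul_inv] using
    (isBigO_refl (fun n : ℕ => (n : ℝ)) atTop).mul_isLittleO ((isLittleO_one_iff ℝ).2 hlim)

theorem strong_cesaro_cotype_growth
    {X : Type} [NormedAddCommGroup X] [NormedSpace ℂ X]
    (q qs : ℝ) (hq : 2 ≤ q) (hqs : 2 ≤ qs)
    (hcotype : HasCotypeQ X q) (hcotype' : HasCotypeQ (StrongDual ℂ X) qs)
    (T : X →L[ℂ] X) (C : ℝ) (hT : StrongCesaroBounded T C) :
    ((fun n : ℕ => ‖T ^ n‖) =O[atTop]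
        fun n : ℕ => (n : ℝ) / Real.log n ^ (1 / min q qs)) ∧
      (fun n : ℕ => ‖T ^ n‖) =o[atTop] fun n : ℕ => (n : ℝ) := by
  obtain ⟨K, hK, hX⟩ := hcotype
  obtain ⟨K', hK', hX'⟩ := hcotype'
  obtain ⟨A, hA⟩ : ∃ A, ∀ n R : ℕ, 0 < R → 2 ^ R ≤ n → ‖T ^ n‖ * R ^ (min q qs)⁻¹ ≤ A * n := by
    rcases min_cases q qs with ⟨hmin, -⟩ | ⟨hmin, -⟩ <;> rw [hmin]
    · exact ⟨_, fun n R hR hRn =>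
        hT.norm_pow_mul_rpow_le_of_isCotypeConstant hX (by linarith) hK.le hR hRn⟩
    · exact ⟨_, fun n R hR hRn =>
        hT.norm_pow_mul_rpow_le_of_isCotypeConstant_dual hX' (by linarith) hK'.le hR hRn⟩
  have hs : 0 < (min q qs)⁻¹ := inv_pos.2 (lt_min (by linarith) (by linarith))
  have hO := (isBigO_div_log_rpow_of_mul_rpow_le (u := (T ^ ·)) hs.le hA).norm_left
  rw [one_div]
  exact ⟨hO, hO.trans_isLittleO (isLittleO_div_log_rpow hs)⟩
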